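/- Section construction for scalars in $\mathbb{R}^{n+1}$: let $\psi$ be a scalar field on $\Sigma_n$, $\chi$ any map from scalar fields on $\Sigma_n$ to scalar fields on $\Sigma_n$, and let $s$ solve $s^2+(n-1)s=1$. Define $\varpi_\chi(\psi)=\psi^{(0)}-\epsilon H^{-2}(\chi(\psi)^{(s)}-\chi(\psi)^{(0)})$ using homogeneous extensions of degrees $0$ and $s$. Then $\varpi_\chi(\psi)|_{\Sigma}=\psi$, and the restricted flat Laplacian satisfies $(\square_{n+1}\varpi_\chi(\psi))|_{\Sigma}=\square_{\Sigma}\psi+\chi(\psi)$. -/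

import Mathlib

noncomputable section
noncomputable section

/-- Partial derivative `∂_A f` in the canonical coordinates. -/
def pdD {d : ℕ} (A : Fin d) (f : (Fin d → ℝ) → ℝ) (y : Fin d → ℝ) : ℝ :=
  fderiv ℝ f y (Pi.single A 1)

/-- The quadratic form `y² = y^A y_A = ∑ η_A (y^A)²` (diagonal `η`, entries ±1). -/
def quadForm {d : ℕ} (η : Fin d → ℝ) (y : Fin d → ℝ) : ℝ :=
  ∑ A, η A * y A * y A

/-- Flat Laplace-de Rham operator on scalars: `□φ = η^{AB} ∂_A ∂_B φ`. -/
def flatLap {d : ℕ} (η : Fin d → ℝ) (φ : (Fin d → ℝ) → ℝ) (y : Fin d → ℝ) : ℝ :=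
  ∑ A, η A * pdD A (pdD A φ) y

/-- Projection of the open cone onto the pseudo-sphere `Σ = {y² = -ε H⁻²}`:
`y ↦ y / (H √|y²|)`; composing with it gives the degree-zero homogeneous
extension of a field on `Σ`. -/
def projSphere {d : ℕ} (η : Fin d → ℝ) (H : ℝ) (y : Fin d → ℝ) : Fin d → ℝ :=
  (H * Real.sqrt |quadForm η y|)⁻¹ • y

/-- The Laplace-de Rham operator of the induced metric on the pseudo-sphere `Σ`,
computed through the degree-zero homogeneous extension:
`□_Σ(φ|_Σ) = (□_{n+1}(φ∘proj))|_Σ` (this characterizes `□_Σ`, being the `r = 0`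
case of the restriction formula). -/
def sphereLap {d : ℕ} (η : Fin d → ℝ) (H : ℝ) (φ : (Fin d → ℝ) → ℝ)
    (y : Fin d → ℝ) : ℝ :=
  flatLap η (fun z => φ (projSphere η H z)) y

/-- Extension by homogeneity of degree `r` of a field on the pseudo-sphere
`Σ_n = {y² = -ε H⁻²}`:  `ρ^{(r)}(y) = ρ(y/(H√|y²|)) (H√|y²|)^r`. -/
def homExt {d : ℕ} (η : Fin d → ℝ) (H r : ℝ) (ρ : (Fin d → ℝ) → ℝ)
    (y : Fin d → ℝ) : ℝ :=
  ρ (projSphere η H y) * (H * Real.sqrt |quadForm η y|) ^ r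

open Filter

lemma pdD_congr {d : ℕ} {A : Fin d} {f g : (Fin d → ℝ) → ℝ} {y : Fin d → ℝ}
    (h : f =ᶠ[nhds y] g) : pdD A f y = pdD A g y := by
  unfold pdD; rw [h.fderiv_eq]

lemma pdD_hasFDerivAt {d : ℕ} {A : Fin d} {f : (Fin d → ℝ) → ℝ}
    {L : (Fin d → ℝ) →L[ℝ] ℝ} {y : Fin d → ℝ}
    (h : HasFDerivAt f L y) : pdD A f y = L (Pi.single A 1) := by
  unfold pdD; rw [h.fderiv]

lemma pdD_add_const_mul {d : ℕ} {A : Fin d} {f g : (Fin d → ℝ) → ℝ} {a : ℝ} {y : Fin d → ℝ}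
    (hf : DifferentiableAt ℝ f y) (hg : DifferentiableAt ℝ g y) :
    pdD A (fun z => f z + a * g z) y = pdD A f y + a * pdD A g y := by
  unfold pdD
  rw [fderiv_fun_add hf (hg.const_mul a), fderiv_const_mul hg a]
  simp

lemma pdD_add {d : ℕ} {A : Fin d} {f g : (Fin d → ℝ) → ℝ} {y : Fin d → ℝ}
    (hf : DifferentiableAt ℝ f y) (hg : DifferentiableAt ℝ g y) :
    pdD A (fun z => f z + g z) y = pdD A f y + pdD A g y := by
  unfold pdD
  rw [fderiv_fun_add hf hg]
  simp

lemma pdD_mul {d : ℕ} {A : Fin d} {f g : (Fin d → ℝ) → ℝ} {y : Fin d → ℝ}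
    (hf : DifferentiableAt ℝ f y) (hg : DifferentiableAt ℝ g y) :
    pdD A (fun z => f z * g z) y = pdD A f y * g y + f y * pdD A g y := by
  unfold pdD
  rw [fderiv_fun_mul hf hg]
  simp only [ContinuousLinearMap.add_apply, ContinuousLinearMap.smul_apply, smul_eq_mul]
  ring

def DQ {d : ℕ} (η z : Fin d → ℝ) : (Fin d → ℝ) →L[ℝ] ℝ :=
  ∑ A, (2 * η A * z A) • (ContinuousLinearMap.proj A : (Fin d → ℝ) →L[ℝ] ℝ)

lemma DQ_single {d : ℕ} (η z : Fin d → ℝ) (A : Fin d) :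
    DQ η z (Pi.single A 1) = 2 * η A * z A := by
  unfold DQ
  rw [ContinuousLinearMap.sum_apply]
  rw [Finset.sum_eq_single A]
  · simp
  · intro B _ hBA
    simp [Pi.single_eq_of_ne hBA]
  · simp

lemma hasFDerivAt_quadForm {d : ℕ} (η z : Fin d → ℝ) :
    HasFDerivAt (quadForm η) (DQ η z) z := by
  have h : ∀ A : Fin d, HasFDerivAt (fun y : Fin d → ℝ => η A * y A * y A)
      ((2 * η A * z A) • (ContinuousLinearMap.proj A : (Fin d → ℝ) →L[ℝ] ℝ)) z := by
    intro A
    have hp : HasFDerivAt (fun y : Fin d → ℝ => y A)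
        (ContinuousLinearMap.proj A : (Fin d → ℝ) →L[ℝ] ℝ) z := by
      exact (ContinuousLinearMap.proj A : (Fin d → ℝ) →L[ℝ] ℝ).hasFDerivAt
    have h2 := (hp.const_mul (η A)).fun_mul hp
    refine h2.congr_fderiv ?_
    ext v
    simp [ContinuousLinearMap.proj_apply]
    ring
  exact HasFDerivAt.fun_sum (fun A _ => h A)

lemma contDiff_quadForm {d : ℕ} (η : Fin d → ℝ) : ContDiff ℝ (⊤ : ℕ∞) (quadForm η) := by
  unfold quadForm
  exact ContDiff.sum fun A _ =>
    ((contDiff_const.mul (ContinuousLinearMap.proj A : (Fin d → ℝ) →L[ℝ] ℝ).contDiff).mul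
      (ContinuousLinearMap.proj A : (Fin d → ℝ) →L[ℝ] ℝ).contDiff)

lemma quadForm_smul {d : ℕ} (η : Fin d → ℝ) (t : ℝ) (z : Fin d → ℝ) :
    quadForm η (t • z) = t ^ 2 * quadForm η z := by
  unfold quadForm
  rw [Finset.mul_sum]
  refine Finset.sum_congr rfl fun A _ => ?_
  simp [Pi.smul_apply, smul_eq_mul]
  ring

/-- section construction for scalars in `ℝ^{n+1}`: for a scalar
field `ψ` on `Σ_n`, any map `χ` from scalar fields on `Σ_n` to scalar fields on
`Σ_n`, and `s` solving `s² + (n-1)s = 1`, the extension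
`ϖ_χ(ψ) = ψ^{(0)} - ε H⁻² (χ(ψ)^{(s)} - χ(ψ)^{(0)})`
is a section (`ϖ_χ(ψ)|_Σ = ψ`) and satisfies
`(□_{n+1} ϖ_χ(ψ))|_Σ = □_Σ ψ + χ(ψ)`.
Here fields on `Σ_n` are represented by functions on `ℝ^{n+1}` (only their
values on `Σ_n` matter, the extensions depending only on those), and
`□_Σ ψ = (□_{n+1} ψ^{(0)})|_Σ` is the Laplace-de Rham operator of the induced
metric (the `r = 0` case of the restriction formula). -/
theorem section_construction_scalar {n : ℕ}
    (η : Fin (n + 1) → ℝ) (hη : ∀ A, η A = 1 ∨ η A = -1)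
    (ε H : ℝ) (hε : ε = 1 ∨ ε = -1) (hH : 0 < H)
    (ψ : (Fin (n + 1) → ℝ) → ℝ) (hψ : ContDiff ℝ (⊤ : ℕ∞) ψ)
    (χ : ((Fin (n + 1) → ℝ) → ℝ) → ((Fin (n + 1) → ℝ) → ℝ))
    (hχ : ContDiff ℝ (⊤ : ℕ∞) (χ ψ))
    (s : ℝ) (hs : s ^ 2 + ((n : ℝ) - 1) * s = 1) :
    (∀ y : Fin (n + 1) → ℝ, quadForm η y = -ε / H ^ 2 →
        (homExt η H 0 ψ y - ε / H ^ 2 * (homExt η H s (χ ψ) y - homExt η H 0 (χ ψ) y))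
          = ψ y)
    ∧ (∀ y : Fin (n + 1) → ℝ, quadForm η y = -ε / H ^ 2 →
        flatLap η (fun z => homExt η H 0 ψ z
            - ε / H ^ 2 * (homExt η H s (χ ψ) z - homExt η H 0 (χ ψ) z)) y
          = flatLap η (homExt η H 0 ψ) y + χ ψ y) := by
  have hH0 : H ≠ 0 := ne_of_gt hH
  have hε2 : ε * ε = 1 := by rcases hε with h|h <;> rw [h] <;> norm_num
  have hae : |ε| = 1 := by rcases hε with h|h <;> rw [h] <;> norm_num
  have hN1 : ∀ y : Fin (n+1) → ℝ, quadForm η y = -ε / H ^ 2 →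
      H * Real.sqrt |quadForm η y| = 1 := by
    intro y hy
    have h1 : |(-ε / H ^ 2)| = (H⁻¹) ^ 2 := by
      rw [abs_div, abs_neg, hae, abs_of_pos (pow_pos hH 2), one_div, inv_pow]
    rw [hy, h1, Real.sqrt_sq (by positivity)]
    exact mul_inv_cancel₀ hH0
  have hproj_fix : ∀ y : Fin (n+1) → ℝ, quadForm η y = -ε / H ^ 2 →
      projSphere η H y = y := by
    intro y hy
    unfold projSphere
    rw [hN1 y hy]
    simp
  constructor
  · intro y hy
    unfold homExt
    rw [hN1 y hy, hproj_fix y hy]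
    simp [Real.one_rpow, Real.rpow_zero]
  · intro y₀ hy₀
    set c : ℝ := -ε * H ^ 2 with hc
    set m : ℝ := s / 2 with hm
    have hcQy₀ : c * quadForm η y₀ = 1 := by
      rcases hε with h|h <;> rw [hy₀, hc, h] <;> field_simp
    set U : Set (Fin (n+1) → ℝ) := {z | 0 < c * quadForm η z} with hU
    have hUopen : IsOpen U :=
      isOpen_lt continuous_const (continuous_const.mul (contDiff_quadForm η).continuous)
    have hy₀U : y₀ ∈ U := by
      simp only [hU, Set.mem_setOf_eq, hcQy₀]; norm_num
    set P := homExt η H 0 ψ with hPdef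
    set F := homExt η H 0 (χ ψ) with hFdef
    set G : (Fin (n+1) → ℝ) → ℝ := fun z => (c * quadForm η z) ^ m with hGdef
    have hNs : ∀ z ∈ U, H * Real.sqrt |quadForm η z| = Real.sqrt (c * quadForm η z) := by
      intro z hz
      have hz' : (0:ℝ) < c * quadForm η z := hz
      have habs : |quadForm η z| = (c * quadForm η z) / H ^ 2 := by
        rcases hε with h|h
        · have hcneg : c = -H ^ 2 := by rw [hc, h]; ring
          have hQneg : quadForm η z ≤ 0 := by nlinarith [pow_pos hH 2]
          rw [abs_of_nonpos hQneg, hcneg]; field_simp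
        · have hcpos : c = H ^ 2 := by rw [hc, h]; ring
          have hQpos : 0 ≤ quadForm η z := by nlinarith [pow_pos hH 2]
          rw [abs_of_nonneg hQpos, hcpos]; field_simp
      rw [habs, Real.sqrt_div hz'.le, Real.sqrt_sq hH.le]
      field_simp
    have hSext : ∀ z ∈ U, homExt η H s (χ ψ) z = F z * G z := by
      intro z hz
      have hz' : (0:ℝ) < c * quadForm η z := hz
      show homExt η H s (χ ψ) z = homExt η H 0 (χ ψ) z * (c * quadForm η z) ^ m
      unfold homExt
      rw [hNs z hz, Real.rpow_zero, mul_one]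
      congr 1
      rw [Real.sqrt_eq_rpow, ← Real.rpow_mul hz'.le]
      congr 1
      rw [hm]; ring
    have hprojU : ∀ z ∈ U, projSphere η H z = (Real.sqrt (c * quadForm η z))⁻¹ • z := by
      intro z hz
      unfold projSphere
      rw [hNs z hz]
    have hprojC : ∀ z ∈ U, ContDiffAt ℝ (⊤ : ℕ∞) (projSphere η H) z := by
      intro z hz
      have hz' : (0:ℝ) < c * quadForm η z := hz
      have h1 : ContDiffAt ℝ (⊤ : ℕ∞) (fun w => (Real.sqrt (c * quadForm η w))⁻¹ • w) z := by
        have hs1 : ContDiffAt ℝ (⊤ : ℕ∞) (fun w => Real.sqrt (c * quadForm η w)) z :=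
          (Real.contDiffAt_sqrt (ne_of_gt hz')).comp z
            ((contDiff_const.mul (contDiff_quadForm η)).contDiffAt)
        exact (hs1.inv (ne_of_gt (Real.sqrt_pos.2 hz'))).smul contDiffAt_id
      exact h1.congr_of_eventuallyEq
        (eventuallyEq_of_mem (hUopen.mem_nhds hz) fun w hw => hprojU w hw)
    have hFeq : F = fun z => χ ψ (projSphere η H z) := by
      funext z
      show homExt η H 0 (χ ψ) z = _
      unfold homExt
      rw [Real.rpow_zero, mul_one]
    have hPeq : P = fun z => ψ (projSphere η H z) := by
      funext z
      show homExt η H 0 ψ z = _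
      unfold homExt
      rw [Real.rpow_zero, mul_one]
    have hFC : ∀ z ∈ U, ContDiffAt ℝ (⊤ : ℕ∞) F z := by
      intro z hz
      rw [hFeq]
      exact (hχ.contDiffAt).comp z (hprojC z hz)
    have hPC : ∀ z ∈ U, ContDiffAt ℝ (⊤ : ℕ∞) P z := by
      intro z hz
      rw [hPeq]
      exact (hψ.contDiffAt).comp z (hprojC z hz)
    have hFd : ∀ z ∈ U, DifferentiableAt ℝ F z := fun z hz =>
      (hFC z hz).differentiableAt (by simp)
    have hPd : ∀ z ∈ U, DifferentiableAt ℝ P z := fun z hz =>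
      (hPC z hz).differentiableAt (by simp)
    have hpdF : ∀ A, DifferentiableAt ℝ (pdD A F) y₀ := by
      intro A
      have h1 : ContDiffAt ℝ (⊤ : ℕ∞) (fderiv ℝ F) y₀ := (hFC y₀ hy₀U).fderiv_right (by simp)
      have h2 : ContDiffAt ℝ (⊤ : ℕ∞) (pdD A F) y₀ := by
        unfold pdD
        exact h1.clm_apply contDiffAt_const
      exact h2.differentiableAt (by simp)
    have hpdP : ∀ A, DifferentiableAt ℝ (pdD A P) y₀ := by
      intro A
      have h1 : ContDiffAt ℝ (⊤ : ℕ∞) (fderiv ℝ P) y₀ := (hPC y₀ hy₀U).fderiv_right (by simp)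
      have h2 : ContDiffAt ℝ (⊤ : ℕ∞) (pdD A P) y₀ := by
        unfold pdD
        exact h1.clm_apply contDiffAt_const
      exact h2.differentiableAt (by simp)
    have hG' : ∀ z ∈ U, HasFDerivAt G
        ((m * (c * quadForm η z) ^ (m - 1)) • (c • DQ η z)) z := by
      intro z hz
      have hz' : (0:ℝ) < c * quadForm η z := hz
      exact ((hasFDerivAt_quadForm η z).const_mul c).rpow_const (Or.inl (ne_of_gt hz'))
    have hGd : ∀ z ∈ U, DifferentiableAt ℝ G z := fun z hz => (hG' z hz).differentiableAt
    have hpdG : ∀ (A : Fin (n+1)) (z), z ∈ U → pdD A G z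
        = (m * c * (2 * η A)) * (z A * (c * quadForm η z) ^ (m - 1)) := by
      intro A z hz
      rw [pdD_hasFDerivAt (hG' z hz)]
      rw [ContinuousLinearMap.smul_apply, ContinuousLinearMap.smul_apply, DQ_single]
      simp only [smul_eq_mul]
      ring
    have hpdGy₀ : ∀ A, pdD A G y₀ = m * c * (2 * η A) * y₀ A := by
      intro A
      rw [hpdG A y₀ hy₀U, hcQy₀, Real.one_rpow]
      ring
    have hGA' : ∀ A : Fin (n+1), HasFDerivAt
        (fun z => (m * c * (2 * η A)) * (z A * (c * quadForm η z) ^ (m - 1)))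
        ((m * c * (2 * η A)) •
          ((y₀ A) • (((m-1) * (c * quadForm η y₀) ^ (m - 1 - 1)) • (c • DQ η y₀))
            + ((c * quadForm η y₀) ^ (m-1)) •
              (ContinuousLinearMap.proj A : (Fin (n+1) → ℝ) →L[ℝ] ℝ))) y₀ := by
      intro A
      have hp : HasFDerivAt (fun z : Fin (n+1) → ℝ => z A)
          (ContinuousLinearMap.proj A : (Fin (n+1) → ℝ) →L[ℝ] ℝ) y₀ := by
        exact (ContinuousLinearMap.proj A : (Fin (n+1) → ℝ) →L[ℝ] ℝ).hasFDerivAt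
      have hr : HasFDerivAt (fun z => (c * quadForm η z) ^ (m - 1))
          (((m-1) * (c * quadForm η y₀) ^ (m - 1 - 1)) • (c • DQ η y₀)) y₀ :=
        ((hasFDerivAt_quadForm η y₀).const_mul c).rpow_const
          (Or.inl (by rw [hcQy₀]; norm_num))
      exact (hp.mul hr).const_mul _
    have hpdGdiff : ∀ A, DifferentiableAt ℝ (pdD A G) y₀ := by
      intro A
      have he : pdD A G =ᶠ[nhds y₀]
          (fun z => (m * c * (2 * η A)) * (z A * (c * quadForm η z) ^ (m - 1))) :=
        eventuallyEq_of_mem (hUopen.mem_nhds hy₀U) (fun z hz => hpdG A z hz)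
      exact he.differentiableAt_iff.mpr (hGA' A).differentiableAt
    have hpd2G : ∀ A, pdD A (pdD A G) y₀
        = m * c * (2 * η A) * (y₀ A * ((m-1) * (c * (2 * η A * y₀ A))) + 1) := by
      intro A
      have he : pdD A G =ᶠ[nhds y₀]
          (fun z => (m * c * (2 * η A)) * (z A * (c * quadForm η z) ^ (m - 1))) :=
        eventuallyEq_of_mem (hUopen.mem_nhds hy₀U) (fun z hz => hpdG A z hz)
      rw [pdD_congr he, pdD_hasFDerivAt (hGA' A)]
      rw [hcQy₀, Real.one_rpow]
      simp only [ContinuousLinearMap.smul_apply, ContinuousLinearMap.add_apply,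
        ContinuousLinearMap.proj_apply, DQ_single, smul_eq_mul, Pi.single_eq_same,
        Real.one_rpow]
      ring
    have hsumG : ∑ A, η A * pdD A (pdD A G) y₀ = c := by
      have hterm : ∀ A, η A * pdD A (pdD A G) y₀
          = (4*m*(m-1)*c^2) * (η A * y₀ A * y₀ A) + 2*m*c := by
        intro A
        rw [hpd2G A]
        rcases hη A with h|h <;> rw [h] <;> ring
      rw [Finset.sum_congr rfl fun A _ => hterm A]
      rw [Finset.sum_add_distrib, ← Finset.mul_sum, Finset.sum_const]
      have hQy : ∑ A, η A * y₀ A * y₀ A = -ε / H ^ 2 := hy₀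
      rw [hQy]
      simp only [Finset.card_univ, Fintype.card_fin, nsmul_eq_mul, Nat.cast_add, Nat.cast_one]
      rw [hc, hm]
      rcases hε with h|h <;> rw [h] <;> field_simp
      · linear_combination (-4) * hs
      · linear_combination 4 * hs
    have hhom : ∀ t : ℝ, 0 < t → ∀ z, F (t • z) = F z := by
      intro t ht z
      rw [hFeq]
      simp only
      congr 1
      unfold projSphere
      rw [quadForm_smul, abs_mul, abs_of_pos (by positivity : (0:ℝ) < t ^ 2),
        Real.sqrt_mul (by positivity) , Real.sqrt_sq ht.le, smul_smul]
      congr 1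
      rcases eq_or_ne (Real.sqrt |quadForm η z|) 0 with h0 | h0
      · rw [h0]; simp
      · field_simp
    have hEuler : fderiv ℝ F y₀ y₀ = 0 := by
      have hγ : HasDerivAt (fun t : ℝ => t • y₀) y₀ 1 := by
        simpa using (hasDerivAt_id (1:ℝ)).smul_const y₀
      have hconst : (fun t : ℝ => F (t • y₀)) =ᶠ[nhds 1] (fun _ => F y₀) := by
        filter_upwards [eventually_gt_nhds zero_lt_one] with t ht
        exact hhom t ht y₀
      have h1 : HasDerivAt (fun t : ℝ => F (t • y₀)) 0 1 :=
        (hasDerivAt_const (1:ℝ) (F y₀)).congr_of_eventuallyEq hconst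
      have h2 : HasDerivAt (fun t : ℝ => F (t • y₀)) (fderiv ℝ F y₀ y₀) 1 := by
        have hF' : HasFDerivAt F (fderiv ℝ F y₀) ((fun t : ℝ => t • y₀) 1) := by
          simpa using (hFd y₀ hy₀U).hasFDerivAt
        have h3 := hF'.comp_hasDerivAt (1:ℝ) hγ
        exact h3
      exact h2.unique h1
    have hsum0 : ∑ A, y₀ A * pdD A F y₀ = 0 := by
      have hy' : ∑ A, y₀ A • (Pi.single A (1:ℝ) : Fin (n+1) → ℝ) = y₀ := by
        rw [← Finset.univ_sum_single y₀]
        refine Finset.sum_congr rfl fun A _ => ?_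
        ext B
        simp [Pi.single_apply]
      calc ∑ A, y₀ A * pdD A F y₀
          = ∑ A, fderiv ℝ F y₀ (y₀ A • (Pi.single A (1:ℝ) : Fin (n+1) → ℝ)) := by
            refine Finset.sum_congr rfl fun A _ => ?_
            rw [map_smul, smul_eq_mul]
            rfl
        _ = fderiv ℝ F y₀ (∑ A, y₀ A • (Pi.single A (1:ℝ) : Fin (n+1) → ℝ)) := (map_sum _ _ _).symm
        _ = 0 := by rw [hy', hEuler]
    have hFy₀ : F y₀ = χ ψ y₀ := by
      rw [hFeq]
      simp only
      rw [hproj_fix y₀ hy₀]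
    set W : (Fin (n+1) → ℝ) → ℝ := fun z => F z * (G z - 1) with hWdef
    have hWd : ∀ z ∈ U, DifferentiableAt ℝ W z := fun z hz =>
      (hFd z hz).mul ((hGd z hz).sub_const 1)
    have hpdW : ∀ (A : Fin (n+1)) (z), z ∈ U →
        pdD A W z = pdD A F z * (G z - 1) + F z * pdD A G z := by
      intro A z hz
      have h1 : pdD A W z = pdD A F z * (G z - 1) + F z * pdD A (fun w => G w - 1) z := by
        rw [hWdef]
        exact pdD_mul (hFd z hz) ((hGd z hz).sub_const 1)
      rw [h1]
      have h2 : pdD A (fun w => G w - 1) z = pdD A G z := by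
        unfold pdD
        rw [fderiv_sub_const]
      rw [h2]
    have hpd2W : ∀ A, pdD A (pdD A W) y₀
        = 2 * (pdD A F y₀ * pdD A G y₀) + F y₀ * pdD A (pdD A G) y₀ := by
      intro A
      have he2 : pdD A W =ᶠ[nhds y₀]
          (fun z => pdD A F z * (G z - 1) + F z * pdD A G z) :=
        eventuallyEq_of_mem (hUopen.mem_nhds hy₀U) (fun z hz => hpdW A z hz)
      rw [pdD_congr he2]
      have hd1 : DifferentiableAt ℝ (fun z => pdD A F z * (G z - 1)) y₀ :=
        (hpdF A).mul ((hGd y₀ hy₀U).sub_const 1)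
      have hd2 : DifferentiableAt ℝ (fun z => F z * pdD A G z) y₀ :=
        (hFd y₀ hy₀U).mul (hpdGdiff A)
      have hadd : pdD A (fun z => pdD A F z * (G z - 1) + F z * pdD A G z) y₀
          = pdD A (fun z => pdD A F z * (G z - 1)) y₀
            + pdD A (fun z => F z * pdD A G z) y₀ := pdD_add hd1 hd2
      rw [hadd]
      rw [pdD_mul (hpdF A) ((hGd y₀ hy₀U).sub_const 1)]
      rw [pdD_mul (hFd y₀ hy₀U) (hpdGdiff A)]
      have hG1 : G y₀ = 1 := by
        show (c * quadForm η y₀) ^ m = 1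
        rw [hcQy₀, Real.one_rpow]
      have h3 : pdD A (fun w => G w - 1) y₀ = pdD A G y₀ := by
        unfold pdD
        rw [fderiv_sub_const]
      rw [h3, hG1]
      ring
    have hWdiffy : ∀ A, DifferentiableAt ℝ (pdD A W) y₀ := by
      intro A
      have he3 : pdD A W =ᶠ[nhds y₀]
          (fun z => pdD A F z * (G z - 1) + F z * pdD A G z) :=
        eventuallyEq_of_mem (hUopen.mem_nhds hy₀U) (fun z hz => hpdW A z hz)
      refine he3.differentiableAt_iff.mpr ?_
      exact ((hpdF A).mul ((hGd y₀ hy₀U).sub_const 1)).add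
        ((hFd y₀ hy₀U).mul (hpdGdiff A))
    have hsumW : ∑ A, η A * pdD A (pdD A W) y₀ = c * χ ψ y₀ := by
      have hterm : ∀ A, η A * pdD A (pdD A W) y₀
          = (4 * m * c) * (y₀ A * pdD A F y₀) + χ ψ y₀ * (η A * pdD A (pdD A G) y₀) := by
        intro A
        rw [hpd2W A, hFy₀, hpdGy₀ A]
        rcases hη A with h|h <;> rw [h] <;> ring
      rw [Finset.sum_congr rfl fun A _ => hterm A]
      rw [Finset.sum_add_distrib, ← Finset.mul_sum, ← Finset.mul_sum, hsum0, hsumG]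
      ring
    -- final assembly
    set k : ℝ := ε / H ^ 2 with hk
    have hkc : -k * c = 1 := by
      rcases hε with h|h <;> rw [hk, hc, h] <;> field_simp
    have hφU : ∀ z ∈ U, P z - k * (homExt η H s (χ ψ) z - F z) = P z + (-k) * W z := by
      intro z hz
      rw [hSext z hz, hWdef]
      ring
    have hAeq : ∀ A, pdD A (pdD A (fun z => P z - k * (homExt η H s (χ ψ) z - F z))) y₀
        = pdD A (pdD A P) y₀ + (-k) * pdD A (pdD A W) y₀ := by
      intro A
      have he2 : pdD A (fun z => P z - k * (homExt η H s (χ ψ) z - F z)) =ᶠ[nhds y₀]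
          (fun z => pdD A P z + (-k) * pdD A W z) := by
        filter_upwards [hUopen.mem_nhds hy₀U] with z hz
        have he1z : (fun w => P w - k * (homExt η H s (χ ψ) w - F w)) =ᶠ[nhds z]
            (fun w => P w + (-k) * W w) :=
          eventuallyEq_of_mem (hUopen.mem_nhds hz) (fun w hw => hφU w hw)
        rw [pdD_congr he1z, pdD_add_const_mul (hPd z hz) (hWd z hz)]
      rw [pdD_congr he2]
      exact pdD_add_const_mul (hpdP A) (hWdiffy A)
    show (∑ A, η A * pdD A (pdD A (fun z => P z - k * (homExt η H s (χ ψ) z - F z))) y₀)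
        = flatLap η P y₀ + χ ψ y₀
    rw [Finset.sum_congr rfl fun A _ => by rw [hAeq A]]
    have hsplit : ∑ A, η A * (pdD A (pdD A P) y₀ + (-k) * pdD A (pdD A W) y₀)
        = (∑ A, η A * pdD A (pdD A P) y₀) + (-k) * (∑ A, η A * pdD A (pdD A W) y₀) := by
      rw [Finset.mul_sum, ← Finset.sum_add_distrib]
      refine Finset.sum_congr rfl fun A _ => ?_
      ring
    rw [hsplit, hsumW]
    have : flatLap η P y₀ = ∑ A, η A * pdD A (pdD A P) y₀ := rfl
    rw [this]
    have h4 : -k * (c * χ ψ y₀) = χ ψ y₀ := by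
      rw [← mul_assoc, hkc, one_mul]
    linarith [h4]
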